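/- arXiv:2512.15487 — 3 statements merged into one kernel-verified Lean document; each statement's English description precedes it below -/
import Mathlib

section
/- For each r > 3/2 the space Y^r is continuously embedded in the space of bounded continuous functions on ℝ²; that is, |u|_∞ ≲ |u|_{Y^r} and every u ∈ Y^r has a bounded continuous representative. -/
/-!
By Cauchy–Schwarz, `|u(x)| ≤ ∫ |û| ≤ (∫ w⁻¹)^{1/2} |u|_{Y^r}` with `w = wgt r`, and `u` is continuous
by dominated convergence, so everything rests on `w⁻¹ ∈ L¹(ℝ²)`. On the line `k₁ = a ≠ 0` the
substitution `k₂ = a √(1 + a²) s` turns `w` into `(1 + a²)^r (1 + s²)^r`, so the integral over the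
line is `|a| √(1 + a²) (1 + a²)^{-r} ∫ (1 + s²)^{-r} ds ≤ C (1 + a²)^{1-r}`, which is integrable
in `a` exactly when `r - 1 > 1/2`.
-/

open MeasureTheory

/-- The inverse Fourier transform on ℝ². -/
noncomputable def invFT (g : ℝ × ℝ → ℂ) : ℝ × ℝ → ℂ := fun x =>
  ∫ k : ℝ × ℝ, Complex.exp (((2 * Real.pi * (x.1 * k.1 + x.2 * k.2) : ℝ) : ℂ) * Complex.I) * g k

/-- The anisotropic KP weight `(1 + k₁² + k₂²/k₁²)^r`. -/
noncomputable def wgt (r : ℝ) (k : ℝ × ℝ) : ℝ := (1 + k.1 ^ 2 + k.2 ^ 2 / k.1 ^ 2) ^ r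

/-- The squared `Y^r` norm, computed on the Fourier side. -/
noncomputable def YnormSq (r : ℝ) (g : ℝ × ℝ → ℂ) : ℝ := ∫ k : ℝ × ℝ, wgt r k * ‖g k‖ ^ 2

open Filter

lemma norm_eq_sqrt_inv_mul_sqrt_mul_sq {E : Type*} [NormedAddCommGroup E] {w : ℝ} (hw : 0 < w)
    (v : E) : ‖v‖ = √w⁻¹ * √(w * ‖v‖ ^ 2) := by
  rw [← Real.sqrt_mul (inv_nonneg.2 hw.le), inv_mul_cancel_left₀ hw.ne',
    Real.sqrt_sq (norm_nonneg v)]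

section CauchySchwarz

variable {α : Type*} [MeasurableSpace α] {μ : Measure α}

lemma memLp_two_sqrt {f : α → ℝ} (hf₀ : ∀ x, 0 ≤ f x) (hf : Integrable f μ) :
    MemLp (fun x => √(f x)) 2 μ :=
  (memLp_two_iff_integrable_sq (Real.continuous_sqrt.comp_aestronglyMeasurable hf.1)).2
    (hf.congr (Eventually.of_forall fun x => (Real.sq_sqrt (hf₀ x)).symm))

lemma integral_sqrt_mul_sqrt_le {f h : α → ℝ} (hf₀ : ∀ x, 0 ≤ f x) (hh₀ : ∀ x, 0 ≤ h x)
    (hf : Integrable f μ) (hh : Integrable h μ) :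
    ∫ x, √(f x) * √(h x) ∂μ ≤ √(∫ x, f x ∂μ) * √(∫ x, h x ∂μ) := by
  have holder := integral_mul_le_Lp_mul_Lq_of_nonneg Real.HolderConjugate.two_two
    (Eventually.of_forall fun x => Real.sqrt_nonneg (f x))
    (Eventually.of_forall fun x => Real.sqrt_nonneg (h x))
    (by simpa using memLp_two_sqrt hf₀ hf) (by simpa using memLp_two_sqrt hh₀ hh)
  simpa only [Real.rpow_two, Real.sq_sqrt (hf₀ _), Real.sq_sqrt (hh₀ _), ← Real.sqrt_eq_rpow]
    using holder

variable {E : Type*} [NormedAddCommGroup E] {w : α → ℝ} {g : α → E}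

lemma integrable_of_weighted_sq (hw : ∀ x, 0 < w x) (hg : AEStronglyMeasurable g μ)
    (hw_inv : Integrable (fun x => (w x)⁻¹) μ) (hwg : Integrable (fun x => w x * ‖g x‖ ^ 2) μ) :
    Integrable g μ := by
  refine (integrable_norm_iff hg).1 ?_
  have := (memLp_two_sqrt (fun x => inv_nonneg.2 (hw x).le) hw_inv).integrable_mul
    (memLp_two_sqrt (fun x => mul_nonneg (hw x).le (sq_nonneg ‖g x‖)) hwg)
  exact this.congr (Eventually.of_forall fun x =>
    (norm_eq_sqrt_inv_mul_sqrt_mul_sq (hw x) (g x)).symm)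

lemma integral_norm_le_of_weighted_sq (hw : ∀ x, 0 < w x)
    (hw_inv : Integrable (fun x => (w x)⁻¹) μ) (hwg : Integrable (fun x => w x * ‖g x‖ ^ 2) μ) :
    ∫ x, ‖g x‖ ∂μ ≤ √(∫ x, (w x)⁻¹ ∂μ) * √(∫ x, w x * ‖g x‖ ^ 2 ∂μ) := by
  rw [integral_congr_ae (Eventually.of_forall fun x =>
    norm_eq_sqrt_inv_mul_sqrt_mul_sq (hw x) (g x))]
  exact integral_sqrt_mul_sqrt_le (fun x => inv_nonneg.2 (hw x).le)
    (fun x => mul_nonneg (hw x).le (sq_nonneg ‖g x‖)) hw_inv hwg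

end CauchySchwarz

lemma norm_invFT_integrand (g : ℝ × ℝ → ℂ) (x k : ℝ × ℝ) :
    ‖Complex.exp (((2 * Real.pi * (x.1 * k.1 + x.2 * k.2) : ℝ) : ℂ) * Complex.I) * g k‖
      = ‖g k‖ := by
  rw [norm_mul, Complex.norm_exp_ofReal_mul_I, one_mul]

lemma norm_invFT_le (g : ℝ × ℝ → ℂ) (x : ℝ × ℝ) : ‖invFT g x‖ ≤ ∫ k, ‖g k‖ :=
  (norm_integral_le_integral_norm _).trans_eq (by simp only [norm_invFT_integrand])

lemma continuous_invFT {g : ℝ × ℝ → ℂ} (hg : Integrable g) : Continuous (invFT g) :=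
  continuous_of_dominated
    (fun x => (Continuous.aestronglyMeasurable (by fun_prop)).mul hg.1)
    (fun x => Eventually.of_forall fun k => (norm_invFT_integrand g x k).le) hg.norm
    (Eventually.of_forall fun k => by fun_prop)

lemma wgt_pos (r : ℝ) (k : ℝ × ℝ) : 0 < wgt r k :=
  Real.rpow_pos_of_pos (by positivity) r

lemma measurable_wgt (r : ℝ) : Measurable (wgt r) := by
  unfold wgt; fun_prop

lemma integrable_inv_one_add_sq_rpow {s : ℝ} (hs : 1 / 2 < s) :
    Integrable fun t : ℝ => ((1 + t ^ 2) ^ s)⁻¹ := by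
  have h := integrable_rpow_neg_one_add_norm_sq (E := ℝ) (μ := volume) (r := 2 * s)
    (by simp only [Module.finrank_self, Nat.cast_one]; linarith)
  refine h.congr (Eventually.of_forall fun t => ?_)
  simp only [Real.norm_eq_abs, sq_abs]
  rw [neg_div, mul_div_cancel_left₀ s two_ne_zero, Real.rpow_neg (by positivity)]

lemma wgt_mk_mul_sqrt (r : ℝ) {a : ℝ} (ha : a ≠ 0) (s : ℝ) :
    wgt r (a, a * √(1 + a ^ 2) * s) = (1 + a ^ 2) ^ r * (1 + s ^ 2) ^ r := by
  rw [wgt, ← Real.mul_rpow (by positivity) (by positivity)]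
  congr 1
  field_simp
  rw [Real.sq_sqrt (by positivity)]
  ring

lemma integrable_inv_wgt_slice {r : ℝ} (hr : 1 / 2 < r) {a : ℝ} (ha : a ≠ 0) :
    Integrable fun t => (wgt r (a, t))⁻¹ := by
  have hc : a * √(1 + a ^ 2) ≠ 0 := mul_ne_zero ha (by positivity)
  refine (integrable_comp_mul_left_iff (fun t => (wgt r (a, t))⁻¹) hc).1 ?_
  simp_rw [mul_assoc, ← mul_assoc a, wgt_mk_mul_sqrt r ha, mul_inv]
  exact (integrable_inv_one_add_sq_rpow hr).const_mul _

lemma integral_inv_wgt_slice (r : ℝ) {a : ℝ} (ha : a ≠ 0) :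
    ∫ t, (wgt r (a, t))⁻¹
      = |a| * √(1 + a ^ 2) * ((1 + a ^ 2) ^ r)⁻¹ * ∫ s, ((1 + s ^ 2) ^ r)⁻¹ := by
  have h := Measure.integral_comp_mul_left (fun t => (wgt r (a, t))⁻¹) (a * √(1 + a ^ 2))
  simp only [wgt_mk_mul_sqrt r ha, mul_inv, integral_const_mul, smul_eq_mul, abs_mul,
    abs_inv, abs_of_nonneg (Real.sqrt_nonneg _)] at h
  have hc : |a| * √(1 + a ^ 2) ≠ 0 := by positivity
  rw [mul_assoc _ ((1 + a ^ 2) ^ r)⁻¹, h]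
  field_simp

lemma abs_mul_sqrt_mul_inv_rpow_le (r a : ℝ) :
    |a| * √(1 + a ^ 2) * ((1 + a ^ 2) ^ r)⁻¹ ≤ ((1 + a ^ 2) ^ (r - 1))⁻¹ := by
  have hA : 0 < 1 + a ^ 2 := by positivity
  rw [Real.rpow_sub_one hA.ne', inv_div, div_eq_mul_inv]
  gcongr
  calc |a| * √(1 + a ^ 2) ≤ √(1 + a ^ 2) * √(1 + a ^ 2) := by
        gcongr; exact Real.abs_le_sqrt (by linarith)
    _ = 1 + a ^ 2 := Real.mul_self_sqrt hA.le

lemma integrable_inv_wgt {r : ℝ} (hr : 3 / 2 < r) : Integrable fun k => (wgt r k)⁻¹ := by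
  have hmeas : AEStronglyMeasurable (fun k => (wgt r k)⁻¹) (volume.prod volume) :=
    (measurable_wgt r).inv.aestronglyMeasurable
  rw [Measure.volume_eq_prod]
  refine (integrable_prod_iff hmeas).2 ⟨?_, ?_⟩
  · filter_upwards [volume.ae_ne 0] with a ha
    exact integrable_inv_wgt_slice (by linarith) ha
  refine ((integrable_inv_one_add_sq_rpow (s := r - 1) (by linarith)).mul_const
    (∫ s : ℝ, ((1 + s ^ 2) ^ r)⁻¹)).mono' hmeas.norm.integral_prod_right' ?_
  filter_upwards [volume.ae_ne 0] with a ha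
  simp only [norm_inv, Real.norm_of_nonneg (wgt_pos r _).le]
  rw [integral_inv_wgt_slice r ha, Real.norm_of_nonneg (by positivity)]
  gcongr
  exact abs_mul_sqrt_mul_inv_rpow_le r a

/-- For `r > 3/2` the space `Y^r` is continuously embedded in `C_b(ℝ²)`:
if `u` has Fourier transform `g` with finite `Y^r` norm, then `u` is bounded and continuous
with `|u|_∞ ≲ |u|_{Y^r}`. -/
theorem stmt2 (r : ℝ) (hr : 3 / 2 < r) :
    ∃ C > (0 : ℝ), ∀ g : ℝ × ℝ → ℂ, Measurable g →
      Integrable (fun k => wgt r k * ‖g k‖ ^ 2) →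
      Continuous (invFT g) ∧ ∀ p : ℝ × ℝ, ‖invFT g p‖ ≤ C * Real.sqrt (YnormSq r g) := by
  have hw_inv := integrable_inv_wgt hr
  refine ⟨√(∫ k, (wgt r k)⁻¹) + 1, by positivity, fun g hg hgY => ?_⟩
  have hg_int := integrable_of_weighted_sq (wgt_pos r) hg.aestronglyMeasurable hw_inv hgY
  refine ⟨continuous_invFT hg_int, fun p => ?_⟩
  calc ‖invFT g p‖ ≤ ∫ k, ‖g k‖ := norm_invFT_le g p
    _ ≤ √(∫ k, (wgt r k)⁻¹) * √(YnormSq r g) :=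
        integral_norm_le_of_weighted_sq (wgt_pos r) hw_inv hgY
    _ ≤ (√(∫ k, (wgt r k)⁻¹) + 1) * √(YnormSq r g) := by gcongr; linarith
end

section
/- The integral ∫_{ℝ²} (1 + k₁² + k₂²/k₁²)^{-r} dk₁ dk₂ is finite for every r > 3/2. -/
/-!
For fixed `k₁ = x ≠ 0` the substitution `k₂ = x √(1 + x²) t` turns the integrand into
`(1 + x²)^(-r) (1 + t²)^(-r)`, so the inner integral is
`|x| (1 + x²)^(1/2 - r) ∫ (1 + t²)^(-r)`. Since `|x| ≤ √(1 + x²)`, this is at most a constant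
times `(1 + x²)^(-(r - 1))`, which is integrable because `r - 1 > 1/2`; Tonelli concludes.
-/

open MeasureTheory Real

lemma integrable_rpow_neg_one_add_sq {s : ℝ} (hs : 1 / 2 < s) :
    Integrable (fun t : ℝ => (1 + t ^ 2) ^ (-s)) := by
  have := integrable_rpow_neg_one_add_norm_sq (E := ℝ) (μ := volume) (r := 2 * s)
    (by simp; linarith)
  simpa [norm_eq_abs, sq_abs, neg_div] using this

lemma one_add_sq_add_div_sq_rpow {x : ℝ} (hx : x ≠ 0) (r y : ℝ) :
    (1 + x ^ 2 + y ^ 2 / x ^ 2) ^ (-r) =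
      (1 + x ^ 2) ^ (-r) * (1 + (y / (x * √(1 + x ^ 2))) ^ 2) ^ (-r) := by
  have hsq : √(1 + x ^ 2) ^ 2 = 1 + x ^ 2 := sq_sqrt (by positivity)
  have hsqrt : √(1 + x ^ 2) ≠ 0 := by positivity
  rw [← mul_rpow (by positivity) (by positivity)]
  congr 1
  field_simp
  rw [hsq]
  ring

lemma integrable_one_add_sq_add_div_sq_rpow {x : ℝ} (hx : x ≠ 0) {r : ℝ} (hr : 1 / 2 < r) :
    Integrable (fun y : ℝ => (1 + x ^ 2 + y ^ 2 / x ^ 2) ^ (-r)) := by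
  simp_rw [one_add_sq_add_div_sq_rpow hx]
  exact ((integrable_rpow_neg_one_add_sq hr).comp_div (mul_ne_zero hx (by positivity))).const_mul _

lemma integral_one_add_sq_add_div_sq_rpow {x : ℝ} (hx : x ≠ 0) (r : ℝ) :
    ∫ y, (1 + x ^ 2 + y ^ 2 / x ^ 2) ^ (-r) =
      |x| * (1 + x ^ 2) ^ (1 / 2 - r) * ∫ t, (1 + t ^ 2) ^ (-r) := by
  simp_rw [one_add_sq_add_div_sq_rpow hx, integral_const_mul]
  rw [Measure.integral_comp_div (fun t => (1 + t ^ 2) ^ (-r)), smul_eq_mul, abs_mul,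
    abs_of_nonneg (sqrt_nonneg _), sqrt_eq_rpow, sub_eq_add_neg, rpow_add (by positivity)]
  ring

lemma abs_mul_one_add_sq_rpow_le (x s : ℝ) :
    |x| * (1 + x ^ 2) ^ (1 / 2 - s) ≤ (1 + x ^ 2) ^ (1 - s) := by
  have habs : |x| ≤ (1 + x ^ 2) ^ (1 / 2 : ℝ) := by
    rw [← sqrt_eq_rpow, ← sqrt_sq_eq_abs]
    exact sqrt_le_sqrt (by linarith)
  calc |x| * (1 + x ^ 2) ^ (1 / 2 - s)
      ≤ (1 + x ^ 2) ^ (1 / 2 : ℝ) * (1 + x ^ 2) ^ (1 / 2 - s) := by gcongr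
    _ = (1 + x ^ 2) ^ (1 - s) := by rw [← rpow_add (by positivity)]; ring_nf

lemma integrable_abs_mul_one_add_sq_rpow {r : ℝ} (hr : 3 / 2 < r) :
    Integrable (fun x : ℝ => |x| * (1 + x ^ 2) ^ (1 / 2 - r)) := by
  refine (integrable_rpow_neg_one_add_sq (s := r - 1) (by linarith)).mono'
    (by fun_prop) (ae_of_all _ fun x => ?_)
  rw [norm_of_nonneg (by positivity), neg_sub]
  exact abs_mul_one_add_sq_rpow_le x r

/-- The integral `∫_{ℝ²} (1 + k₁² + k₂²/k₁²)^{-r} dk` is finite for every `r > 3/2`. -/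
theorem stmt3 (r : ℝ) (hr : 3 / 2 < r) :
    Integrable (fun k : ℝ × ℝ => (1 + k.1 ^ 2 + k.2 ^ 2 / k.1 ^ 2) ^ (-r)) := by
  have hne : ∀ᵐ x : ℝ, x ≠ 0 := by simp [ae_iff]
  rw [Measure.volume_eq_prod]
  refine (integrable_prod_iff (Measurable.aestronglyMeasurable (by fun_prop))).2 ⟨?_, ?_⟩
  · filter_upwards [hne] with x hx using integrable_one_add_sq_add_div_sq_rpow hx (by linarith)
  · refine ((integrable_abs_mul_one_add_sq_rpow hr).mul_const (∫ t, (1 + t ^ 2) ^ (-r))).congr ?_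
    filter_upwards [hne] with x hx
    have hnorm (y : ℝ) :
        ‖(1 + x ^ 2 + y ^ 2 / x ^ 2) ^ (-r)‖ = (1 + x ^ 2 + y ^ 2 / x ^ 2) ^ (-r) :=
      norm_of_nonneg (by positivity)
    simp only [hnorm, integral_one_add_sq_add_div_sq_rpow hx]
end

section
/- Let W be a Banach space, W₀ and Λ₀ open neighbourhoods of w* ∈ W and 0 ∈ ℝ respectively, and G : W₀ × Λ₀ → W differentiable in w for each λ, with G(w*,0)=0, d₁G[w*,0] an isomorphism of W, d₁G[·,0] continuous at w*, and G(w,λ) → G(w,0), d₁G[w,λ] → d₁G[w,0] as λ → 0 uniformly over w ∈ W₀. Then there exist open neighbourhoods W ⊆ W₀ of w* and Λ ⊆ Λ₀ of 0 and a unique map h : Λ → W with h continuous at 0, h(0) = w*, G(h(λ),λ) = 0 for all λ ∈ Λ, and any solution (w,λ) ∈ W × Λ of G(w,λ)=0 satisfies w = h(λ). -/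
/-!
For `λ` near `0` and `w` in a small closed ball around `w*`, `d₁G[w,λ]` lies within
`c < ‖A⁻¹‖⁻¹` of `A = d₁G[w*,0]`, by continuity of `d₁G[·,0]` at `w*` and uniform convergence
in `λ`. By the mean value inequality `G(·,λ)` then approximates `A` on the ball with constant `c`,
so it is injective there, and the contraction argument behind the inverse function theorem gives
it a zero within `‖G(w*,λ)‖ / (‖A⁻¹‖⁻¹ - c)` of `w*`. This zero is `h(λ)`, and it tends to `w*`
because `G(w*,λ) → G(w*,0) = 0`.
-/

open Set Filter Metric Topology
open scoped NNReal

theorem tendstoUniformlyOn_nhds_zero_of_forall_abs_lt {α β : Type*} [SeminormedAddCommGroup β]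
    {F : ℝ → α → β} {s : Set α} {Λ₀ : Set ℝ} (hΛ₀ : Λ₀ ∈ 𝓝 0)
    (hF : ∀ η > (0 : ℝ), ∃ τ > (0 : ℝ), ∀ lam ∈ Λ₀, |lam| < τ → ∀ x ∈ s,
      ‖F lam x - F 0 x‖ ≤ η) :
    TendstoUniformlyOn F (F 0) (𝓝 0) s := by
  rw [Metric.tendstoUniformlyOn_iff]
  intro ε hε
  obtain ⟨τ, hτ, hFτ⟩ := hF (ε / 2) (half_pos hε)
  filter_upwards [hΛ₀, ball_mem_nhds 0 hτ] with lam hlam hlamτ x hx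
  rw [dist_comm, dist_eq_norm]
  exact (hFτ lam hlam (by simpa using hlamτ) x hx).trans_lt (half_lt_self hε)

theorem Convex.approximatesLinearOn_of_norm_hasFDerivWithin_sub_le {E F : Type*}
    [NormedAddCommGroup E] [NormedSpace ℝ E] [NormedAddCommGroup F] [NormedSpace ℝ F]
    {f : E → F} {f' : E → E →L[ℝ] F} {φ : E →L[ℝ] F} {s : Set E} {c : ℝ≥0} (hs : Convex ℝ s)
    (hf : ∀ x ∈ s, HasFDerivWithinAt f (f' x) s x) (bound : ∀ x ∈ s, ‖f' x - φ‖ ≤ c) :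
    ApproximatesLinearOn f φ s c :=
  fun _ hx _ hy => hs.norm_image_sub_le_of_norm_hasFDerivWithin_le' hf bound hy hx

namespace ApproximatesLinearOn

variable {𝕜 E F : Type*} [NontriviallyNormedField 𝕜] [NormedAddCommGroup E] [NormedSpace 𝕜 E]
  [NormedAddCommGroup F] [NormedSpace 𝕜 F] {f : E → F} {A : E ≃L[𝕜] F} {s : Set E}
  {c K : ℝ≥0}

theorem injOn_of_nnnorm_symm_le (hf : ApproximatesLinearOn f (A : E →L[𝕜] F) s c)
    (hK : ‖(A.symm : F →L[𝕜] E)‖₊ ≤ K) (hc : c < K⁻¹) : InjOn f s := by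
  refine hf.injOn ?_
  rcases eq_or_ne ‖(A.symm : F →L[𝕜] E)‖₊ 0 with h | h
  · have hA : (A.symm : F →L[𝕜] E) = 0 := nnnorm_eq_zero.1 h
    refine Or.inl ⟨fun x y => ?_⟩
    rw [← A.symm_apply_apply x, ← A.symm_apply_apply y]
    simp [← ContinuousLinearEquiv.coe_coe, hA]
  · exact Or.inr (hc.trans_le (inv_anti₀ (pos_iff_ne_zero.2 h) hK))

theorem exists_zero_mem_closedBall [CompleteSpace E]
    (hf : ApproximatesLinearOn f (A : E →L[𝕜] F) s c) (hK : ‖(A.symm : F →L[𝕜] E)‖₊ ≤ K)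
    {b : E} {ρ : ℝ} (hρ : 0 ≤ ρ) (hbs : closedBall b ρ ⊆ s)
    (hb : ‖f b‖ ≤ ((K : ℝ)⁻¹ - c) * ρ) : ∃ y ∈ closedBall b ρ, f y = 0 := by
  let R : (A : E →L[𝕜] F).NonlinearRightInverse :=
    { toFun := A.symm
      nnnorm := K
      bound' := fun y => ((A.symm : F →L[𝕜] E).le_opNorm y).trans (by gcongr; exact hK)
      right_inv' := A.apply_symm_apply }
  exact hf.surjOn_closedBall_of_nonlinearRightInverse R hρ hbs (by simpa using hb)

theorem exists_zero_mem_closedBall_unique [CompleteSpace E]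
    (hf : ApproximatesLinearOn f (A : E →L[𝕜] F) s c) (hK : ‖(A.symm : F →L[𝕜] E)‖₊ ≤ K)
    (hc : c < K⁻¹) {b : E} (hbs : closedBall b (‖f b‖ / ((K : ℝ)⁻¹ - c)) ⊆ s) :
    ∃ y ∈ closedBall b (‖f b‖ / ((K : ℝ)⁻¹ - c)), f y = 0 ∧ ∀ x ∈ s, f x = 0 → x = y := by
  have hgap : 0 < (K : ℝ)⁻¹ - c := by
    rw [sub_pos, ← NNReal.coe_inv]; exact_mod_cast hc
  obtain ⟨y, hy, hy0⟩ := hf.exists_zero_mem_closedBall hK (by positivity) hbs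
    (by rw [mul_div_cancel₀ _ hgap.ne'])
  exact ⟨y, hy, hy0, fun x hx hx0 =>
    hf.injOn_of_nnnorm_symm_le hK hc hx (hbs hy) (hx0.trans hy0.symm)⟩

theorem exists_implicitFunction_of_eventually {ι : Type*} [TopologicalSpace ι] [CompleteSpace E]
    {f : ι → E → F} (hK : ‖(A.symm : F →L[𝕜] E)‖₊ ≤ K) (hc : c < K⁻¹) {b : E} {r : ℝ}
    (hr : 0 < r) {i₀ : ι} (hb : f i₀ b = 0) (hfb : ContinuousAt (fun i => f i b) i₀)
    (hf : ∀ᶠ i in 𝓝 i₀, ApproximatesLinearOn (f i) (A : E →L[𝕜] F) (closedBall b r) c) :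
    ∃ h : ι → E, h i₀ = b ∧ ContinuousAt h i₀ ∧ ∀ᶠ i in 𝓝 i₀,
      h i ∈ ball b r ∧ f i (h i) = 0 ∧ ∀ x ∈ closedBall b r, f i x = 0 → x = h i := by
  have hsmall : Tendsto (fun i => ‖f i b‖ / ((K : ℝ)⁻¹ - c)) (𝓝 i₀) (𝓝 0) := by
    simpa [ContinuousAt, hb] using hfb.norm.div_const ((K : ℝ)⁻¹ - c)
  obtain ⟨U, hU, hUo, hi₀U⟩ :=
    _root_.eventually_nhds_iff.1 (hf.and (hsmall.eventually_lt_const hr))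
  choose! h hhball hhzero hhuniq using fun i (hi : i ∈ U) =>
    (hU i hi).1.exists_zero_mem_closedBall_unique hK hc (closedBall_subset_closedBall (hU i hi).2.le)
  have hh₀ : h i₀ = b := (hhuniq i₀ hi₀U b (mem_closedBall_self hr.le) hb).symm
  refine ⟨h, hh₀, ?_, ?_⟩
  · rw [ContinuousAt, hh₀, ← tendsto_sub_nhds_zero_iff]
    refine squeeze_zero_norm' ?_ hsmall
    filter_upwards [hUo.mem_nhds hi₀U] with i hi
    simpa [dist_eq_norm] using hhball i hi
  · filter_upwards [hUo.mem_nhds hi₀U] with i hi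
    exact ⟨closedBall_subset_ball (hU i hi).2 (hhball i hi), hhzero i hi, hhuniq i hi⟩

end ApproximatesLinearOn

theorem TendstoUniformlyOn.exists_closedBall_eventually_approximatesLinearOn {ι E F : Type*}
    [NormedAddCommGroup E] [NormedSpace ℝ E] [NormedAddCommGroup F] [NormedSpace ℝ F]
    {l : Filter ι} {f : ι → E → F} {f' : ι → E → E →L[ℝ] F} {f'₀ : E → E →L[ℝ] F} {s : Set E}
    {b : E} {φ : E →L[ℝ] F} {c : ℝ≥0} (hf' : TendstoUniformlyOn f' f'₀ l s)
    (hf'₀ : Tendsto f'₀ (𝓝 b) (𝓝 φ)) (hs : s ∈ 𝓝 b)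
    (hf : ∀ᶠ i in l, ∀ x ∈ s, HasFDerivAt (f i) (f' i x) x) (hc : 0 < c) :
    ∃ r > 0, closedBall b r ⊆ s ∧ ∀ᶠ i in l, ApproximatesLinearOn (f i) φ (closedBall b r) c := by
  have hc2 : (0 : ℝ) < c / 2 := by positivity
  obtain ⟨r, hr, hrs⟩ : ∃ r > 0, ∀ x ∈ closedBall b r, x ∈ s ∧ dist (f'₀ x) φ < c / 2 := by
    refine nhds_basis_closedBall.eventually_iff.1 ?_
    filter_upwards [hs, hf'₀ (ball_mem_nhds φ hc2)] with x hxs hx using ⟨hxs, hx⟩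
  refine ⟨r, hr, fun x hx => (hrs x hx).1, ?_⟩
  filter_upwards [hf, Metric.tendstoUniformlyOn_iff.1 hf' _ hc2] with i hfi hf'i
  refine (convex_closedBall b r).approximatesLinearOn_of_norm_hasFDerivWithin_sub_le
    (fun x hx => (hfi x (hrs x hx).1).hasFDerivWithinAt) fun x hx => ?_
  rw [← dist_eq_norm]
  linarith [dist_triangle_left (f' i x) φ (f'₀ x), hf'i x (hrs x hx).1, (hrs x hx).2]

/-- Low-regularity implicit function theorem: `G` is differentiable in `w` for each `λ`,
`G(w*,0) = 0`, `d₁G[w*,0]` is an isomorphism, `d₁G[·,0]` is continuous at `w*`, and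
`G(·,λ) → G(·,0)`, `d₁G[·,λ] → d₁G[·,0]` as `λ → 0` uniformly on `W₀`. Then there are
neighbourhoods `W' ∋ w*`, `Λ' ∋ 0` and a map `h` continuous at `0` with `h 0 = w*`,
`G(h(λ),λ) = 0` on `Λ'`, and any zero of `G(·,λ)` in `W'` equals `h(λ)`. -/
theorem stmt6 {W : Type*} [NormedAddCommGroup W] [NormedSpace ℝ W] [CompleteSpace W]
    (W₀ : Set W) (Λ₀ : Set ℝ) (hW₀ : IsOpen W₀) (hΛ₀ : IsOpen Λ₀)
    (wst : W) (hwst : wst ∈ W₀) (h0 : (0 : ℝ) ∈ Λ₀)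
    (G : W → ℝ → W) (dG : W → ℝ → (W →L[ℝ] W))
    (hdiff : ∀ lam ∈ Λ₀, ∀ w ∈ W₀, HasFDerivAt (fun v => G v lam) (dG w lam) w)
    (hG0 : G wst 0 = 0)
    (hiso : ∃ e : W ≃L[ℝ] W, (e : W →L[ℝ] W) = dG wst 0)
    (hcont : Filter.Tendsto (fun w => dG w 0) (nhds wst) (nhds (dG wst 0)))
    (hunif : ∀ η > (0 : ℝ), ∃ τ > (0 : ℝ), ∀ lam ∈ Λ₀, |lam| < τ → ∀ w ∈ W₀,
      ‖G w lam - G w 0‖ ≤ η ∧ ‖dG w lam - dG w 0‖ ≤ η) :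
    ∃ W' ⊆ W₀, ∃ Λ' ⊆ Λ₀, IsOpen W' ∧ IsOpen Λ' ∧ wst ∈ W' ∧ (0 : ℝ) ∈ Λ' ∧
      ∃ h : ℝ → W, ContinuousAt h 0 ∧ h 0 = wst ∧
        (∀ lam ∈ Λ', h lam ∈ W' ∧ G (h lam) lam = 0) ∧
        (∀ lam ∈ Λ', ∀ w ∈ W', G w lam = 0 → w = h lam) := by
  obtain ⟨e, he⟩ := hiso
  -- `+ 1` keeps `K⁻¹` positive when `W` is trivial, where `‖e.symm‖₊ = 0 = 0⁻¹`.
  set K : ℝ≥0 := ‖(e.symm : W →L[ℝ] W)‖₊ + 1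
  have hK : 0 < K := add_pos_of_nonneg_of_pos zero_le one_pos
  have hΛ₀0 : ∀ᶠ lam in 𝓝 (0 : ℝ), lam ∈ Λ₀ := hΛ₀.mem_nhds h0
  have hGu : TendstoUniformlyOn (fun lam w => G w lam) (fun w => G w 0) (𝓝 0) W₀ :=
    tendstoUniformlyOn_nhds_zero_of_forall_abs_lt hΛ₀0 fun η hη =>
      (hunif η hη).imp fun _ ⟨hτ, H⟩ => ⟨hτ, fun lam hl hlτ w hw => (H lam hl hlτ w hw).1⟩
  have hdGu : TendstoUniformlyOn (fun lam w => dG w lam) (fun w => dG w 0) (𝓝 0) W₀ :=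
    tendstoUniformlyOn_nhds_zero_of_forall_abs_lt hΛ₀0 fun η hη =>
      (hunif η hη).imp fun _ ⟨hτ, H⟩ => ⟨hτ, fun lam hl hlτ w hw => (H lam hl hlτ w hw).2⟩
  obtain ⟨r, hr, hrW₀, happrox⟩ :=
    hdGu.exists_closedBall_eventually_approximatesLinearOn (f := fun lam v => G v lam)
      (he ▸ hcont) (hW₀.mem_nhds hwst) (eventually_of_mem hΛ₀0 hdiff) (c := K⁻¹ / 2)
      (half_pos (inv_pos.2 hK))
  obtain ⟨h, hh0, hhcont, hsol⟩ := ApproximatesLinearOn.exists_implicitFunction_of_eventually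
    (f := fun lam v => G v lam) le_self_add (half_lt_self (inv_pos.2 hK)) hr hG0
    (hGu.tendsto_at hwst) happrox
  obtain ⟨Λ', hΛ', hΛ'o, hΛ'0⟩ := _root_.eventually_nhds_iff.1 (hΛ₀0.and hsol)
  exact ⟨ball wst r, ball_subset_closedBall.trans hrW₀, Λ', fun lam hlam => (hΛ' lam hlam).1,
    isOpen_ball, hΛ'o, mem_ball_self hr, hΛ'0, h, hhcont, hh0,
    fun lam hlam => ⟨(hΛ' lam hlam).2.1, (hΛ' lam hlam).2.2.1⟩,
    fun lam hlam w hw => (hΛ' lam hlam).2.2.2 w (ball_subset_closedBall hw)⟩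
end
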